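/- Let n = 2^{2d}, k = 2^d = √n, and let v = 1_{n/k} ⊗ e₁ be the picket-fence vector with k ones spaced n/k apart. For 1 ≤ i ≤ k let v^{(i)} be the i-th circular shift of v and z^{(i)} = (v^{(i)}, −F v^{(i)}) over the spikes-and-sines dictionary A = [F, I]. Splitting each z^{(i)} into k-sparse halves x₁^{(i)}, x₂^{(i)} with A x₁^{(i)} = A x₂^{(i)}, and setting b = A·(Σ_i x₁^{(i)}), the equation A y = b has at least 2^k solutions y with pairwise distinct supports, each of sparsity between k²/2 and k². -/

import Mathlib

/-!
Every `z⁽ⁱ⁾ = (v⁽ⁱ⁾, -F v⁽ⁱ⁾)` lies in the kernel of `[F, I]`, so for all `c ∈ {0,1}^k` and all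
scalars `aᵢ` the vector `y_c = ∑ᵢ x₁⁽ⁱ⁾ - ∑_{cᵢ = 1} aᵢ z⁽ⁱ⁾` solves `A y = b`.

Since `n = k²`, the Fourier transform of the picket fence `v⁽ⁱ⁾` is supported on the `k`
multiples of `k` (off them it is a geometric sum of a nontrivial `k`-th root of unity), so the
second blocks of all `y_c` live in a fixed set of size `k`. In the first block the `v⁽ⁱ⁾` are
the indicators of the residue classes mod `k`, each of size `k`, and on class `i` the vector
`y_c` is `x₁⁽ⁱ⁾` or `x₁⁽ⁱ⁾ - aᵢ`. Choosing `aᵢ` to be a nonzero value of `x₁⁽ⁱ⁾`, both have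
between `k/2` and `k - 1` nonzero entries, whence `k²/2 ≤ |supp y_c| ≤ k(k - 1) + k`; and `cᵢ`
is read off `y_c` at a point of class `i` where `x₁⁽ⁱ⁾` vanishes.
-/

open Matrix Finset

/-- The `n×n` unitary (discrete) Fourier matrix. -/
noncomputable def fourierMatrix (n : ℕ) : Matrix (Fin n) (Fin n) ℂ :=
  fun j l => Complex.exp (2 * Real.pi * Complex.I * (j : ℕ) * (l : ℕ) / n) / Real.sqrt n

/-- Application of the spikes-and-sines dictionary `A = [F, I]` to a coefficient vector
indexed by `Fin n ⊕ Fin n` (Fourier part on the left, canonical part on the right). -/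
noncomputable def dictApply (n : ℕ) (w : Fin n ⊕ Fin n → ℂ) : Fin n → ℂ :=
  (fourierMatrix n).mulVec (fun j => w (Sum.inl j)) + fun j => w (Sum.inr j)

open Function

section SumSupport

variable {α β M : Type*} [Fintype α] [Zero M] [DecidableEq M]

theorem ncard_support_sum [Fintype β] (w : α ⊕ β → M) :
    (support w).ncard = #{a | w (.inl a) ≠ 0} + #{b | w (.inr b) ≠ 0} := by
  rw [← Nat.card_coe_set_eq, Nat.card_congr Equiv.subtypeSum, Nat.card_sum]
  simp only [mem_support, Nat.card_eq_fintype_card, Fintype.card_subtype]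

theorem ncard_support_inter_range_inl (w : α ⊕ β → M) :
    (support w ∩ Set.range .inl).ncard = #{a | w (.inl a) ≠ 0} := by
  have : support w ∩ Set.range .inl = .inl '' ↑({a | w (.inl a) ≠ 0} : Finset α) := by
    ext (a | b) <;> simp
  rw [this, Set.ncard_image_of_injective _ Sum.inl_injective, Set.ncard_coe_finset]

end SumSupport

theorem Finset.card_sub_card_filter_ne_zero_le {α M : Type*} [Zero M] [DecidableEq M]
    {B : Finset α} {u : α → M} {p : α} (hp : u p ≠ 0) :
    #B - #{q ∈ B | u q ≠ 0} ≤ #{q ∈ B | u q ≠ u p} := by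
  have hzero : {q ∈ B | ¬u q ≠ 0} ⊆ {q ∈ B | u q ≠ u p} :=
    monotone_filter_right B fun q _ hq => by rwa [not_not.mp hq, ne_comm]
  have := B.card_filter_add_card_filter_not (fun q => u q ≠ 0)
  have := card_le_card hzero
  omega

theorem card_filter_mod_eq {n m k : ℕ} (hn : n = m * k) {r : ℕ} (hr : r < k) :
    #{q : Fin n | (q : ℕ) % k = r} = m := by
  subst hn
  suffices #(univ : Finset (Fin m)) = #{q : Fin (m * k) | (q : ℕ) % k = r} by
    simpa using this.symm
  refine card_nbij' (fun t : Fin m => finProdFinEquiv (t, ⟨r, hr⟩))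
    (fun q => (finProdFinEquiv.symm q).1) ?_ ?_ ?_ ?_ <;> intro q hq
  · simp [Nat.mod_eq_of_lt hr]
  · simp
  · simp
  · have : finProdFinEquiv.symm q = ((finProdFinEquiv.symm q).1, ⟨r, hr⟩) := by
      ext
      · rfl
      · simpa using hq
    change finProdFinEquiv ((finProdFinEquiv.symm q).1, _) = q
    rw [← this, Equiv.apply_symm_apply]

def residueIndicator (n k r : ℕ) : Fin n → ℂ := fun q => if (q : ℕ) % k = r then 1 else 0

theorem fourierMatrix_apply_finProdFinEquiv {m k : ℕ} (j : Fin (m * k)) (t : Fin m) (r : Fin k) :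
    fourierMatrix (m * k) j (finProdFinEquiv (t, r)) =
      fourierMatrix (m * k) j (Fin.castLE (Nat.le_mul_of_pos_left k (Fin.pos t)) r) *
        (Complex.exp (2 * Real.pi * Complex.I / m) ^ (j : ℕ)) ^ (t : ℕ) := by
  have hm : (m : ℂ) ≠ 0 := Nat.cast_ne_zero.mpr (Fin.pos t).ne'
  have hk : (k : ℂ) ≠ 0 := Nat.cast_ne_zero.mpr (Fin.pos r).ne'
  simp only [fourierMatrix, finProdFinEquiv_apply_val, Fin.val_castLE,
    ← Complex.exp_nat_mul, div_mul_eq_mul_div, ← Complex.exp_add]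
  congr 2
  push_cast
  field_simp

theorem fourierMatrix_mulVec_residueIndicator_eq_zero {n m k : ℕ} (hn : n = m * k) (r : Fin k)
    (j : Fin n) (hj : ¬m ∣ (j : ℕ)) :
    (fourierMatrix n *ᵥ residueIndicator n k r) j = 0 := by
  subst hn
  have hm : m ≠ 0 := by rintro rfl; exact (Nat.zero_mul k ▸ j).elim0
  have hζ := Complex.isPrimitiveRoot_exp m hm
  have hx : Complex.exp (2 * Real.pi * Complex.I / m) ^ (j : ℕ) ≠ 1 :=
    fun h => hj ((hζ.pow_eq_one_iff_dvd _).mp h)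
  have hxm : (Complex.exp (2 * Real.pi * Complex.I / m) ^ (j : ℕ)) ^ m = 1 := by
    rw [pow_right_comm, hζ.pow_eq_one, one_pow]
  have hind (t : Fin m) (r' : Fin k) :
      residueIndicator (m * k) k r (finProdFinEquiv (t, r')) = if r' = r then 1 else 0 := by
    simp [residueIndicator, Nat.mod_eq_of_lt r'.2, Fin.val_eq_val]
  calc (fourierMatrix (m * k) *ᵥ residueIndicator (m * k) k r) j
      = ∑ tr : Fin m × Fin k, fourierMatrix (m * k) j (finProdFinEquiv tr) *
          residueIndicator (m * k) k r (finProdFinEquiv tr) :=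
        (finProdFinEquiv.sum_comp _).symm
    _ = ∑ t : Fin m, fourierMatrix (m * k) j (finProdFinEquiv (t, r)) := by
        simp [Fintype.sum_prod_type, hind]
    _ = fourierMatrix (m * k) j (Fin.castLE (Nat.le_mul_of_pos_left k hm.bot_lt) r) *
          ∑ t : Fin m, (Complex.exp (2 * Real.pi * Complex.I / m) ^ (j : ℕ)) ^ (t : ℕ) := by
        rw [mul_sum]
        exact sum_congr rfl fun t _ => fourierMatrix_apply_finProdFinEquiv j t r
    _ = 0 := by
        rw [Fin.sum_univ_eq_sum_range (_ ^ ·), geom_sum_eq hx, hxm, sub_self, zero_div, mul_zero]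

theorem dictApply_eq_linearMap (n : ℕ) :
    dictApply n = ⇑(((fourierMatrix n).mulVecLin ∘ₗ LinearMap.funLeft ℂ ℂ Sum.inl +
      LinearMap.funLeft ℂ ℂ Sum.inr : (Fin n ⊕ Fin n → ℂ) →ₗ[ℂ] Fin n → ℂ)) :=
  rfl

theorem dictApply_sum_elim_neg_mulVec (n : ℕ) (u : Fin n → ℂ) :
    dictApply n (Sum.elim u (-(fourierMatrix n *ᵥ u))) = 0 := by
  ext j
  simp [dictApply]

noncomputable def picketKernel (n k r : ℕ) : Fin n ⊕ Fin n → ℂ :=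
  Sum.elim (residueIndicator n k r) (-(fourierMatrix n *ᵥ residueIndicator n k r))

section PicketSolution

variable {n k : ℕ} {x : Fin k → Fin n ⊕ Fin n → ℂ} {p : Fin k → Fin n}

variable (x p) in
/-- The paper takes `aᵢ = 1`, i.e. `x₂⁽ⁱ⁾ = x₁⁽ⁱ⁾ - z⁽ⁱ⁾`; that is `k`-sparse only when `x₁⁽ⁱ⁾`
agrees with `z⁽ⁱ⁾` on its support, so here `z⁽ⁱ⁾` is rescaled to cancel `x₁⁽ⁱ⁾` at `p i`. -/
noncomputable def picketSolution (c : Fin k → Bool) : Fin n ⊕ Fin n → ℂ :=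
  ∑ i, (x i - (if c i then x i (.inl (p i)) else 0) • picketKernel n k i)

theorem dictApply_picketSolution (c : Fin k → Bool) :
    dictApply n (picketSolution x p c) = dictApply n (∑ i, x i) := by
  simp only [picketSolution, dictApply_eq_linearMap, map_sum, map_sub, map_smul]
  simp only [← dictApply_eq_linearMap, picketKernel, dictApply_sum_elim_neg_mulVec, smul_zero,
    sub_zero]

theorem mod_eq_of_inl_mem_support (hx : ∀ i, support (x i) ⊆ support (picketKernel n k i))
    {i : Fin k} {q : Fin n} (hq : x i (.inl q) ≠ 0) : (q : ℕ) % k = i := by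
  by_contra h
  simpa [picketKernel, residueIndicator, h] using hx i hq

theorem picketKernel_inr_eq_zero (hn : n = k * k) (i : Fin k) {q : Fin n} (hq : ¬k ∣ (q : ℕ)) :
    picketKernel n k i (.inr q) = 0 := by
  simp [picketKernel, fourierMatrix_mulVec_residueIndicator_eq_zero hn i q hq]

theorem dvd_of_inr_mem_support (hn : n = k * k)
    (hx : ∀ i, support (x i) ⊆ support (picketKernel n k i))
    {i : Fin k} {q : Fin n} (hq : x i (.inr q) ≠ 0) : k ∣ (q : ℕ) := by
  by_contra h
  exact hx i hq (picketKernel_inr_eq_zero hn i h)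

theorem picketSolution_inl (hx : ∀ i, support (x i) ⊆ support (picketKernel n k i))
    (c : Fin k → Bool) {i : Fin k} {q : Fin n} (hq : (q : ℕ) % k = i) :
    picketSolution x p c (.inl q) = x i (.inl q) - if c i then x i (.inl (p i)) else 0 := by
  have hind (i' : Fin k) : residueIndicator n k i' q = if i' = i then 1 else 0 := by
    simp [residueIndicator, hq, Fin.val_eq_val, eq_comm]
  simp only [picketSolution, Finset.sum_apply, Pi.sub_apply, Pi.smul_apply, smul_eq_mul,
    picketKernel, Sum.elim_inl, hind]
  rw [sum_eq_single i]
  · simp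
  · intro i' _ hi'
    have : x i' (.inl q) = 0 := by
      by_contra h
      exact hi' (Fin.ext ((mod_eq_of_inl_mem_support hx h).symm.trans hq))
    simp [this, hi']
  · simp

theorem picketSolution_inr_eq_zero (hn : n = k * k)
    (hx : ∀ i, support (x i) ⊆ support (picketKernel n k i))
    (c : Fin k → Bool) {q : Fin n} (hq : ¬k ∣ (q : ℕ)) :
    picketSolution x p c (.inr q) = 0 := by
  have hxq (i : Fin k) : x i (.inr q) = 0 := by
    by_contra h
    exact hq (dvd_of_inr_mem_support hn hx h)
  simp only [picketSolution, Finset.sum_apply, Pi.sub_apply, Pi.smul_apply,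
    picketKernel_inr_eq_zero hn _ hq, hxq, smul_zero, sub_zero, sum_const_zero]

theorem exists_mod_eq_and_inl_eq_zero (hn : n = k * k)
    (hleft : ∀ i, #{q | x i (.inl q) ≠ 0} = k / 2) (i : Fin k) :
    ∃ q : Fin n, (q : ℕ) % k = i ∧ x i (.inl q) = 0 := by
  have hlt : #{q | x i (.inl q) ≠ 0} < #({q | (q : ℕ) % k = i} : Finset (Fin n)) := by
    rw [hleft, card_filter_mod_eq hn i.2]
    exact Nat.div_lt_self i.pos one_lt_two
  obtain ⟨q, hq, hxq⟩ := exists_mem_notMem_of_card_lt_card hlt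
  simp only [mem_filter, mem_univ, true_and, not_not] at hq hxq
  exact ⟨q, hq, hxq⟩

theorem card_picketSolution_inl_mod_eq_bounds (hn : n = k * k)
    (hx : ∀ i, support (x i) ⊆ support (picketKernel n k i))
    (hp : ∀ i, x i (.inl (p i)) ≠ 0)
    (hleft : ∀ i, #{q | x i (.inl q) ≠ 0} = k / 2) (c : Fin k → Bool) (i : Fin k) :
    k / 2 ≤ #{q | picketSolution x p c (.inl q) ≠ 0 ∧ (q : ℕ) % k = i} ∧
      #{q | picketSolution x p c (.inl q) ≠ 0 ∧ (q : ℕ) % k = i} ≤ k - 1 := by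
  set B : Finset (Fin n) := {q | (q : ℕ) % k = i}
  have hB : #B = k := card_filter_mod_eq hn i.2
  have hclass : ({q | picketSolution x p c (.inl q) ≠ 0 ∧ (q : ℕ) % k = i} : Finset (Fin n)) =
      {q ∈ B | x i (.inl q) - (if c i then x i (.inl (p i)) else 0) ≠ 0} := by
    rw [filter_filter]
    exact filter_congr fun q _ => ⟨fun h => ⟨h.2, picketSolution_inl hx c h.2 ▸ h.1⟩,
      fun h => ⟨picketSolution_inl hx c h.1 ▸ h.2, h.1⟩⟩
  have hT : {q ∈ B | x i (.inl q) ≠ 0} = ({q | x i (.inl q) ≠ 0} : Finset (Fin n)) := by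
    rw [filter_filter]
    exact filter_congr fun q _ => and_iff_right_of_imp (mod_eq_of_inl_mem_support hx)
  rw [hclass]
  cases c i with
  | false =>
    simp only [Bool.false_eq_true, if_false, sub_zero, hT, hleft]
    omega
  | true =>
    simp only [if_true, sub_ne_zero]
    have hlower := card_sub_card_filter_ne_zero_le (B := B) (u := (x i <| .inl ·)) (hp i)
    have hupper : #{q ∈ B | x i (.inl q) ≠ x i (.inl (p i))} < #B :=
      have hpB : p i ∈ B := by simpa [B] using mod_eq_of_inl_mem_support hx (hp i)
      card_lt_card (filter_ssubset.2 ⟨p i, hpB, fun h => h rfl⟩)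
    rw [hT, hleft, hB] at hlower
    omega

theorem picketSolution_support_injective
    (hx : ∀ i, support (x i) ⊆ support (picketKernel n k i))
    (hp : ∀ i, x i (.inl (p i)) ≠ 0)
    (hzero : ∀ i : Fin k, ∃ q : Fin n, (q : ℕ) % k = i ∧ x i (.inl q) = 0) :
    Injective fun c => support (picketSolution x p c) := by
  intro c c' h
  funext i
  obtain ⟨q, hq, hxq⟩ := hzero i
  have hmem (c : Fin k → Bool) : Sum.inl q ∈ support (picketSolution x p c) ↔ c i = true := by
    cases hc : c i <;> simp [picketSolution_inl hx c hq, hxq, hp i, hc]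
  have h' : support (picketSolution x p c) = support (picketSolution x p c') := h
  rw [Bool.eq_iff_iff, ← hmem c, ← hmem c', h']

theorem ncard_support_picketSolution_bounds (hn : n = k * k)
    (hx : ∀ i, support (x i) ⊆ support (picketKernel n k i))
    (hp : ∀ i, x i (.inl (p i)) ≠ 0)
    (hleft : ∀ i, #{q | x i (.inl q) ≠ 0} = k / 2) (c : Fin k → Bool) :
    k * (k / 2) ≤ (support (picketSolution x p c)).ncard ∧
      (support (picketSolution x p c)).ncard ≤ k * k := by
  rw [ncard_support_sum]
  rcases k.eq_zero_or_pos with rfl | hk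
  · subst hn
    simp
  have hleftsum : #{q | picketSolution x p c (.inl q) ≠ 0} =
      ∑ i : Fin k, #{q | picketSolution x p c (.inl q) ≠ 0 ∧ (q : ℕ) % k = i} := by
    rw [card_eq_sum_card_fiberwise (f := fun q : Fin n => (q : ℕ) % k) (t := range k)
      fun q _ => mem_range.2 (Nat.mod_lt _ hk), sum_range]
    simp only [filter_filter]
  have hright : #{q | picketSolution x p c (.inr q) ≠ 0} ≤ k :=
    (card_le_card (monotone_filter_right _ fun q _ hq =>
      Nat.mod_eq_zero_of_dvd (not_not.1 (mt (picketSolution_inr_eq_zero hn hx c) hq)))).trans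
      (card_filter_mod_eq hn hk).le
  have hclass := card_picketSolution_inl_mod_eq_bounds hn hx hp hleft c
  rw [hleftsum]
  constructor
  · calc k * (k / 2) = ∑ _i : Fin k, k / 2 := by simp
      _ ≤ _ := sum_le_sum fun i _ => (hclass i).1
      _ ≤ _ := Nat.le_add_right _ _
  · calc _ ≤ ∑ _i : Fin k, (k - 1) + k :=
          add_le_add (sum_le_sum fun i _ => (hclass i).2) hright
      _ = k * k := by
          rw [sum_const, card_fin, smul_eq_mul, ← Nat.mul_add_one, Nat.sub_add_cancel hk]

end PicketSolution

theorem spikes_and_sines_exponential_list_general (d : ℕ) (hd : 1 ≤ d)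
    (n k : ℕ) (hn : n = 2 ^ (2 * d)) (hk : k = 2 ^ d)
    (v : Fin k → Fin n → ℂ)
    (hv : ∀ (i : Fin k) (j : Fin n), v i j = if (j : ℕ) % k = (i : ℕ) then 1 else 0)
    (x₁ : Fin k → (Fin n ⊕ Fin n → ℂ))
    (hsupp : ∀ i, Function.support (x₁ i) ⊆
      Function.support (Sum.elim (v i) (-((fourierMatrix n).mulVec (v i)))))
    (hleft : ∀ i, (Function.support (x₁ i) ∩ Set.range Sum.inl).ncard = k / 2)
    (b : Fin n → ℂ) (hb : b = dictApply n (∑ i, x₁ i)) :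
    ∃ y : (Fin k → Bool) → (Fin n ⊕ Fin n → ℂ),
      (∀ c, dictApply n (y c) = b) ∧
      (∀ c c', c ≠ c' →
        Function.support (y c) ≠ Function.support (y c')) ∧
      (∀ c, k ^ 2 / 2 ≤ (Function.support (y c)).ncard ∧
        (Function.support (y c)).ncard ≤ k ^ 2) := by
  have hnk : n = k * k := by rw [hn, hk, ← pow_add, two_mul]
  have hk2 : 2 ≤ k := hk ▸ Nat.le_self_pow (by omega) 2
  have hk_even : 2 ∣ k := hk ▸ dvd_pow_self 2 (by omega)
  obtain rfl : v = fun i : Fin k => residueIndicator n k i := funext fun i => funext (hv i)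
  have hleft' (i : Fin k) : #{q | x₁ i (.inl q) ≠ 0} = k / 2 := by
    rw [← ncard_support_inter_range_inl, hleft]
  have hp (i : Fin k) : ∃ q, x₁ i (.inl q) ≠ 0 := by
    obtain ⟨q, hq⟩ := card_pos.1 (hleft' i ▸ Nat.div_pos hk2 two_pos)
    exact ⟨q, (mem_filter.1 hq).2⟩
  choose p hp using hp
  refine ⟨picketSolution x₁ p, fun c => hb ▸ dictApply_picketSolution c, fun c c' hne h => hne
    (picketSolution_support_injective hsupp hp (exists_mod_eq_and_inl_eq_zero hnk hleft') h),
    fun c => ?_⟩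
  rw [sq, Nat.mul_div_assoc k hk_even]
  exact ncard_support_picketSolution_bounds hnk hsupp hp hleft' c

/-- Spikes and sines: with `n = 2^{2d}`, `k = 2^d = √n`, picket-fence vectors
`v⁽ⁱ⁾` (the `i`-th circular shifts of `1_{n/k} ⊗ e₁`, with pairwise disjoint supports),
kernel vectors `z⁽ⁱ⁾ = (v⁽ⁱ⁾, -F v⁽ⁱ⁾)` split into `k`-sparse halves `x₁⁽ⁱ⁾, x₂⁽ⁱ⁾`
(each `x₁⁽ⁱ⁾` having exactly `k/2` of its support in the spike part), and
`b = A(∑ᵢ x₁⁽ⁱ⁾)`, the equation `A y = b` has at least `2^k` solutions with pairwise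
distinct supports, each of sparsity between `k²/2` and `k²`. -/
theorem spikes_and_sines_exponential_list (d : ℕ) (hd : 1 ≤ d)
    (n k : ℕ) (hn : n = 2 ^ (2 * d)) (hk : k = 2 ^ d)
    (v : Fin k → Fin n → ℂ)
    (hv : ∀ (i : Fin k) (j : Fin n), v i j = if (j : ℕ) % k = (i : ℕ) then 1 else 0)
    (x₁ x₂ : Fin k → (Fin n ⊕ Fin n → ℂ))
    (hsplit : ∀ i, x₁ i - x₂ i =
      Sum.elim (v i) (-((fourierMatrix n).mulVec (v i))))
    (hsupp : ∀ i, Function.support (x₁ i) ⊆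
      Function.support (Sum.elim (v i) (-((fourierMatrix n).mulVec (v i)))))
    (hcard : ∀ i, (Function.support (x₁ i)).ncard = k)
    (hleft : ∀ i, (Function.support (x₁ i) ∩ Set.range Sum.inl).ncard = k / 2)
    (b : Fin n → ℂ) (hb : b = dictApply n (∑ i, x₁ i)) :
    ∃ y : (Fin k → Bool) → (Fin n ⊕ Fin n → ℂ),
      (∀ c, dictApply n (y c) = b) ∧
      (∀ c c', c ≠ c' →
        Function.support (y c) ≠ Function.support (y c')) ∧
      (∀ c, k ^ 2 / 2 ≤ (Function.support (y c)).ncard ∧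
        (Function.support (y c)).ncard ≤ k ^ 2) :=
  spikes_and_sines_exponential_list_general d hd n k hn hk v hv x₁ hsupp hleft b hb
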